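/- At z = 2, the sum of the staircase-polygon partition functions over all endpoint heights evaluates in closed form: for every nonnegative integer n, Σ_{j=0}^{n} C_n(2;j) = 4^n · catalan(n). -/

import Mathlib

open Filter Real

/-- Partition function `C_n(z;j)` of a pair of mutually avoiding directed paths of length `2n`
(an adsorbing Dyck path below a directed path whose endpoint has height `2j+2`). -/
noncomputable def Cst (n j : ℕ) (z : ℝ) : ℝ :=
  ∑ m1 ∈ Finset.range (n + 1), ∑ m2 ∈ Finset.range (j + 1),
    (((2 * (m2 : ℝ) + 1) * (2 * (m1 : ℝ) + 2 * j + 3) * ((m1 : ℝ) + m2 + j + 2) *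
        ((m1 : ℝ) - m2 + j + 1)) /
      ((2 * (n : ℝ) + 1) * (2 * (n : ℝ) + 2) * (2 * (n : ℝ) + 3) ^ 2)) *
    (Nat.choose (2 * n + 3) (n + m2 + 2)) * (Nat.choose (2 * n + 3) (n + m1 + j + 3)) *
    (z - 1) ^ (m1 + m2)

/-- Partition function `Z_n^*(z;q) = Σ_{j=0}^{n} C_q(z;j)·C_{n−q}(z;j)` of grafted staircase
polygons constrained to pass through the visit `(q,0)`. -/
noncomputable def Zstar (n q : ℕ) (z : ℝ) : ℝ :=
  ∑ j ∈ Finset.range (n + 1), Cst q j z * Cst (n - q) j z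

/-- Staircase-polygon pressure `P_n^S(z;q) = log(1 − Z_n^*(z;q)/C_n(z;0))`. -/
noncomputable def PS (n q : ℕ) (z : ℝ) : ℝ :=
  Real.log (1 - Zstar n q z / Cst n 0 z)

namespace StaircaseAux
open Finset

/-- real-cast binomial coefficient of `2n+3`. -/
noncomputable def CH (n m : ℕ) : ℝ := ((2 * n + 3).choose m : ℝ)

noncomputable def DD (n : ℕ) : ℝ :=
  (2 * (n : ℝ) + 1) * (2 * (n : ℝ) + 2) * (2 * (n : ℝ) + 3) ^ 2

noncomputable def G (n k s : ℕ) : ℝ :=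
  ((2 * (k : ℝ) + 1) * (2 * (s : ℝ) + 3) * ((s : ℝ) + (k : ℝ) + 2) *
    ((s : ℝ) - (k : ℝ) + 1)) / DD n * CH n (n + k + 2) * CH n (n + s + 3)

noncomputable def A (n a : ℕ) : ℝ := (2 * (a : ℝ) + 1) * CH n (n + a + 2)

noncomputable def S (n r : ℕ) : ℝ := ∑ a ∈ range (n + 2), A n a * (a : ℝ) ^ r

lemma G_eq_zero {n s : ℕ} (k : ℕ) (hs : n < s) : G n k s = 0 := by
  have : (2 * n + 3).choose (n + s + 3) = 0 := Nat.choose_eq_zero_of_lt (by omega)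
  simp [G, CH, this]

/-- triangle-count lemma -/
lemma tri (h : ℕ → ℝ) (m : ℕ) :
    ∑ j ∈ range m, ∑ k ∈ range (j + 1), h k
      = ∑ k ∈ range m, ((m : ℝ) - (k : ℝ)) * h k := by
  induction m with
  | zero => simp
  | succ m ih =>
    rw [Finset.sum_range_succ, ih]
    have h1 : ∑ k ∈ range (m + 1), ((m + 1 : ℕ) : ℝ) * h k - ∑ k ∈ range (m+1), (k : ℝ) * h k
        = ∑ k ∈ range (m + 1), (((m + 1 : ℕ) : ℝ) - (k : ℝ)) * h k := by
      rw [← Finset.sum_sub_distrib]; apply Finset.sum_congr rfl; intro k _; ring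
    rw [← h1]
    have h2 : ∑ k ∈ range m, ((m : ℝ) - (k : ℝ)) * h k
        = (m:ℝ) * ∑ k ∈ range m, h k - ∑ k ∈ range m, (k : ℝ) * h k := by
      rw [Finset.mul_sum, ← Finset.sum_sub_distrib]
      apply Finset.sum_congr rfl; intro k _; ring
    have h3 : ∑ k ∈ range (m+1), ((m + 1 : ℕ) : ℝ) * h k
        = ((m:ℝ)+1) * ∑ k ∈ range (m+1), h k := by
      rw [Finset.mul_sum]; push_cast; rfl
    rw [h2, h3, Finset.sum_range_succ (fun k => (k : ℝ) * h k) m,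
      Finset.sum_range_succ h m]
    ring

lemma inner_m1 (n j m2 : ℕ) (hj : j ≤ n) :
    ∑ m1 ∈ range (n + 1), G n m2 (m1 + j) = ∑ s ∈ Finset.Ico j (n + 1), G n m2 s := by
  have h1 : ∑ s ∈ Finset.Ico j (j + (n + 1)), G n m2 s
      = ∑ i ∈ range (n + 1), G n m2 (j + i) := by
    rw [Finset.sum_Ico_eq_sum_range]; simp
  have h2 : ∑ s ∈ Finset.Ico j (n + 1), G n m2 s + ∑ s ∈ Finset.Ico (n + 1) (j + (n + 1)), G n m2 s
      = ∑ s ∈ Finset.Ico j (j + (n + 1)), G n m2 s :=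
    Finset.sum_Ico_consecutive _ (by omega) (by omega)
  have h3 : ∑ s ∈ Finset.Ico (n + 1) (j + (n + 1)), G n m2 s = 0 := by
    apply Finset.sum_eq_zero
    intro s hs
    exact G_eq_zero m2 (by simp at hs; omega)
  have h4 : ∑ m1 ∈ range (n + 1), G n m2 (m1 + j) = ∑ i ∈ range (n + 1), G n m2 (j + i) := by
    apply Finset.sum_congr rfl; intro i _; rw [add_comm]
  rw [h4, ← h1, ← h2, h3, add_zero]

lemma reindex (n : ℕ) :
    ∑ j ∈ range (n + 1), ∑ m1 ∈ range (n + 1), ∑ m2 ∈ range (j + 1), G n m2 (m1 + j)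
      = ∑ s ∈ range (n + 1), ∑ k ∈ range (s + 1), ((s : ℝ) - (k : ℝ) + 1) * G n k s := by
  have step1 : ∀ j ∈ range (n + 1),
      ∑ m1 ∈ range (n + 1), ∑ m2 ∈ range (j + 1), G n m2 (m1 + j)
        = ∑ s ∈ Finset.Ico j (n + 1), ∑ m2 ∈ range (j + 1), G n m2 s := by
    intro j hj
    rw [Finset.sum_comm]
    rw [Finset.sum_congr rfl (fun m2 _ => inner_m1 n j m2 (by simp at hj; omega))]
    rw [Finset.sum_comm]
  rw [Finset.sum_congr rfl step1]
  have step2 : ∑ j ∈ range (n + 1), ∑ s ∈ Finset.Ico j (n + 1), ∑ m2 ∈ range (j + 1), G n m2 s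
      = ∑ s ∈ range (n + 1), ∑ j ∈ range (s + 1), ∑ m2 ∈ range (j + 1), G n m2 s := by
    have h := Finset.sum_Ico_Ico_comm 0 (n + 1) (fun j s => ∑ m2 ∈ range (j + 1), G n m2 s)
    simp only [← Finset.range_eq_Ico] at h
    exact h
  rw [step2]
  apply Finset.sum_congr rfl
  intro s _
  have h := tri (fun k => G n k s) (s + 1)
  rw [h]
  apply Finset.sum_congr rfl
  intro k _
  push_cast
  ring

lemma halfsum_nat (n : ℕ) :
    ∑ a ∈ range (n + 2), (2 * n + 3).choose (n + a + 2) = 4 ^ (n + 1) := by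
  have h1 : ∀ a ∈ range (n + 2), (2 * n + 3).choose (n + a + 2)
      = (2 * n + 3).choose (n + 1 - a) := by
    intro a ha
    simp only [Finset.mem_range] at ha
    have hk : n + a + 2 ≤ 2 * n + 3 := by omega
    have := Nat.choose_symm hk
    rw [show 2 * n + 3 - (n + a + 2) = n + 1 - a by omega] at this
    omega
  rw [Finset.sum_congr rfl h1]
  have h2 : ∑ a ∈ range (n + 2), (2 * n + 3).choose (n + 1 - a)
      = ∑ a ∈ range (n + 2), (2 * n + 3).choose a := by
    have := Finset.sum_range_reflect (fun i => (2 * n + 3).choose i) (n + 2)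
    simp only [show ∀ j, n + 2 - 1 - j = n + 1 - j from fun j => by omega] at this
    exact this
  rw [h2]
  have := Nat.sum_range_choose_halfway (n + 1)
  rw [show 2 * (n + 1) + 1 = 2 * n + 3 by omega] at this
  exact this

lemma halfsum (n : ℕ) : ∑ a ∈ range (n + 2), CH n (n + a + 2) = 4 ^ (n + 1) := by
  unfold CH
  rw [← Nat.cast_sum]
  rw [halfsum_nat n]
  push_cast
  ring

lemma choose_ratio (n a : ℕ) (ha : a ≤ n + 1) :
    CH n (n + a + 3) * ((n : ℝ) + (a : ℝ) + 3) = CH n (n + a + 2) * ((n : ℝ) + 1 - (a : ℝ)) := by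
  have h0 := Nat.choose_succ_right_eq (2 * n + 3) (n + a + 2)
  rw [show n + a + 2 + 1 = n + a + 3 by omega,
    show 2 * n + 3 - (n + a + 2) = n + 1 - a by omega] at h0
  have hc := congrArg (fun x : ℕ => (x : ℝ)) h0
  simp only [Nat.cast_mul] at hc
  rw [Nat.cast_sub (by omega : a ≤ n + 1)] at hc
  unfold CH
  push_cast at hc ⊢
  linarith [hc]

lemma moment_gen (n : ℕ) (H : ℕ → ℝ) (c : ℝ) (w : ℕ → ℝ)
    (hw : ∀ a : ℕ, (w a - c) * ((n : ℝ) + (a : ℝ) + 3)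
      = H (a + 1) * ((n : ℝ) + 1 - (a : ℝ)) - H a * ((n : ℝ) + (a : ℝ) + 3)) :
    ∑ a ∈ range (n + 2), w a * CH n (n + a + 2)
      = c * 4 ^ (n + 1) - H 0 * CH n (n + 2) := by
  have hsplit : ∑ a ∈ range (n + 2), w a * CH n (n + a + 2)
      = ∑ a ∈ range (n + 2), (w a - c) * CH n (n + a + 2)
        + c * ∑ a ∈ range (n + 2), CH n (n + a + 2) := by
    rw [Finset.mul_sum, ← Finset.sum_add_distrib]
    apply Finset.sum_congr rfl; intro a _; ring
  rw [hsplit, halfsum]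
  have htel : ∑ a ∈ range (n + 2), (w a - c) * CH n (n + a + 2)
      = (fun a => H a * CH n (n + a + 2)) (n + 2) - (fun a => H a * CH n (n + a + 2)) 0 := by
    rw [← Finset.sum_range_sub (fun a => H a * CH n (n + a + 2)) (n + 2)]
    apply Finset.sum_congr rfl
    intro a ha
    simp only [Finset.mem_range] at ha
    have hne : ((n : ℝ) + (a : ℝ) + 3) ≠ 0 := by positivity
    apply mul_right_cancel₀ hne
    have hr := choose_ratio n a (by omega)
    rw [show n + (a + 1) + 2 = n + a + 3 by omega]
    linear_combination CH n (n + a + 2) * hw a - H (a + 1) * hr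
  rw [htel]
  have hz : CH n (n + (n + 2) + 2) = 0 := by
    unfold CH
    rw [Nat.choose_eq_zero_of_lt (by omega)]
    simp
  simp only [hz]
  ring


lemma S_eq_moment (n r : ℕ) :
    S n r = ∑ a ∈ range (n + 2), ((2 * (a : ℝ) + 1) * (a : ℝ) ^ r) * CH n (n + a + 2) := by
  unfold S A
  apply Finset.sum_congr rfl; intro a _; ring

lemma hS0 (n : ℕ) : S n 0 = ((n : ℝ) + 2) * CH n (n + 2) := by
  rw [S_eq_moment]
  have := moment_gen n (fun a => -((n : ℝ) + 2) - (a : ℝ)) 0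
    (fun a => (2 * (a : ℝ) + 1) * (a : ℝ) ^ 0)
    (fun a => by push_cast; ring)
  rw [this]; ring

lemma hS1 (n : ℕ) : S n 1 = ((n : ℝ) + 3 / 2) * 4 ^ (n + 1) - ((n : ℝ) / 2 + 1) * CH n (n + 2) := by
  rw [S_eq_moment]
  have := moment_gen n
    (fun a => (1 + (n : ℝ) / 2) + (-(3 / 2) - (n : ℝ)) * (a : ℝ) - (a : ℝ) ^ 2)
    ((n : ℝ) + 3 / 2)
    (fun a => (2 * (a : ℝ) + 1) * (a : ℝ) ^ 1)
    (fun a => by push_cast; ring)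
  rw [this]; ring

lemma hS2 (n : ℕ) : S n 2 = (-(n : ℝ) - 3 / 2) * 4 ^ (n + 1)
    + (3 + 7 * (n : ℝ) / 2 + (n : ℝ) ^ 2) * CH n (n + 2) := by
  rw [S_eq_moment]
  have := moment_gen n
    (fun a => (-3 - 7 * (n : ℝ) / 2 - (n : ℝ) ^ 2) + (a : ℝ) / 2
      + (-1 - (n : ℝ)) * (a : ℝ) ^ 2 - (a : ℝ) ^ 3)
    (-(n : ℝ) - 3 / 2)
    (fun a => (2 * (a : ℝ) + 1) * (a : ℝ) ^ 2)
    (fun a => by push_cast; ring)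
  rw [this]; ring

lemma hS3 (n : ℕ) : S n 3 = (15 / 4 + 19 * (n : ℝ) / 4 + 3 * (n : ℝ) ^ 2 / 2) * 4 ^ (n + 1)
    - (4 + 5 * (n : ℝ) + 3 * (n : ℝ) ^ 2 / 2) * CH n (n + 2) := by
  rw [S_eq_moment]
  have := moment_gen n
    (fun a => (4 + 5 * (n : ℝ) + 3 * (n : ℝ) ^ 2 / 2)
      + (-(5 / 2) - 15 * (n : ℝ) / 4 - 3 * (n : ℝ) ^ 2 / 2) * (a : ℝ)
      + (3 / 4) * (a : ℝ) ^ 2 + (-(1 / 2) - (n : ℝ)) * (a : ℝ) ^ 3 - (a : ℝ) ^ 4)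
    (15 / 4 + 19 * (n : ℝ) / 4 + 3 * (n : ℝ) ^ 2 / 2)
    (fun a => (2 * (a : ℝ) + 1) * (a : ℝ) ^ 3)
    (fun a => by push_cast; ring)
  rw [this]; ring


noncomputable def Q (n k t : ℕ) : ℝ :=
  A n k * A n t * ((t : ℝ) + (k : ℝ) + 1) * ((t : ℝ) - (k : ℝ)) ^ 2

lemma half_square (n M : ℕ) :
    ∑ t ∈ range M, ∑ k ∈ range M, Q n k t = 2 * ∑ t ∈ range M, ∑ k ∈ range t, Q n k t := by
  have hsplit : ∀ t ∈ range M, ∑ k ∈ range M, Q n k t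
      = ∑ k ∈ range t, Q n k t + ∑ k ∈ Finset.Ico t M, Q n k t := by
    intro t ht
    simp only [Finset.mem_range] at ht
    rw [Finset.range_eq_Ico,
      ← Finset.sum_Ico_consecutive (fun k => Q n k t) (Nat.zero_le t) (le_of_lt ht),
      ← Finset.range_eq_Ico]
  rw [Finset.sum_congr rfl hsplit, Finset.sum_add_distrib]
  have h2 : ∑ t ∈ range M, ∑ k ∈ Finset.Ico t M, Q n k t
      = ∑ k ∈ range M, ∑ t ∈ range (k + 1), Q n k t := by
    have h := Finset.sum_Ico_Ico_comm 0 M (fun t k => Q n k t)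
    simp only [← Finset.range_eq_Ico] at h
    exact h
  have h3 : ∀ k ∈ range M, ∑ t ∈ range (k + 1), Q n k t = ∑ t ∈ range k, Q n k t := by
    intro k _
    rw [Finset.sum_range_succ]
    have : Q n k k = 0 := by unfold Q; ring
    rw [this, add_zero]
  have h4 : ∑ k ∈ range M, ∑ t ∈ range k, Q n k t = ∑ t ∈ range M, ∑ k ∈ range t, Q n k t := by
    apply Finset.sum_congr rfl; intro a _
    apply Finset.sum_congr rfl; intro b _
    unfold Q; ring
  rw [h2, Finset.sum_congr rfl h3, h4]
  ring

lemma expand (n : ℕ) :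
    ∑ t ∈ range (n + 2), ∑ k ∈ range (n + 2), Q n k t
      = 2 * (S n 0 * S n 3 + S n 0 * S n 2 - S n 1 * S n 2 - S n 1 * S n 1) := by
  have prod : ∀ i j : ℕ, S n i * S n j
      = ∑ t ∈ range (n + 2), ∑ k ∈ range (n + 2), (A n t * (t : ℝ) ^ i) * (A n k * (k : ℝ) ^ j) :=
    fun i j => Finset.sum_mul_sum _ _ _ _
  have hre : 2 * (S n 0 * S n 3 + S n 0 * S n 2 - S n 1 * S n 2 - S n 1 * S n 1)
      = S n 0 * S n 3 + S n 3 * S n 0 + S n 0 * S n 2 + S n 2 * S n 0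
        - S n 1 * S n 2 - S n 2 * S n 1 - 2 * (S n 1 * S n 1) := by ring
  rw [hre, prod 0 3, prod 3 0, prod 0 2, prod 2 0, prod 1 2, prod 2 1, prod 1 1]
  rw [Finset.mul_sum]
  simp only [Finset.mul_sum, ← Finset.sum_add_distrib, ← Finset.sum_sub_distrib]
  apply Finset.sum_congr rfl; intro t _
  apply Finset.sum_congr rfl; intro k _
  unfold Q; ring


lemma GQ (n k s : ℕ) :
    ((s : ℝ) - (k : ℝ) + 1) * G n k s = (1 / DD n) * Q n k (s + 1) := by
  unfold G Q A
  rw [show n + (s + 1) + 2 = n + s + 3 by omega]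
  push_cast
  ring

lemma hcat (n : ℕ) :
    ((n : ℝ) + 1) * ((n : ℝ) + 2) * CH n (n + 2)
      = (2 * (n : ℝ) + 1) * (2 * (n : ℝ) + 2) * (2 * (n : ℝ) + 3) * (catalan n : ℝ) := by
  have h1 := Nat.add_one_mul_choose_eq (2 * n + 2) (n + 1)
  rw [show 2 * n + 2 + 1 = 2 * n + 3 by omega, show n + 1 + 1 = n + 2 by omega] at h1
  have h2 := Nat.succ_mul_centralBinom_succ n
  simp only [Nat.centralBinom] at h2
  rw [show 2 * (n + 1) = 2 * n + 2 by omega] at h2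
  have h3 := succ_mul_catalan_eq_centralBinom n
  simp only [Nat.centralBinom] at h3
  have he1 : (2 * (n : ℝ) + 3) * (((2 * n + 2).choose (n + 1) : ℕ) : ℝ)
      = CH n (n + 2) * ((n : ℝ) + 2) := by
    unfold CH; exact_mod_cast h1
  have he2 : ((n : ℝ) + 1) * (((2 * n + 2).choose (n + 1) : ℕ) : ℝ)
      = 2 * (2 * (n : ℝ) + 1) * (((2 * n).choose n : ℕ) : ℝ) := by exact_mod_cast h2
  have he3 : ((n : ℝ) + 1) * (catalan n : ℝ) = (((2 * n).choose n : ℕ) : ℝ) := by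
    exact_mod_cast h3
  linear_combination (-((n : ℝ) + 1)) * he1 + (2 * (n : ℝ) + 3) * he2
    - 2 * (2 * (n : ℝ) + 1) * (2 * (n : ℝ) + 3) * he3


end StaircaseAux

/-- At `z = 2`, the sum of the staircase-polygon partition functions over all endpoint
heights satisfies `Σ_{j=0}^{n} C_n(2;j) = 4^n · catalan(n)`. -/
theorem staircase_partition_sum (n : ℕ) :
    ∑ j ∈ Finset.range (n + 1), Cst n j 2 = 4 ^ n * (catalan n : ℝ) := by
  classical
  have L1 : ∀ j ∈ Finset.range (n + 1), Cst n j 2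
      = ∑ m1 ∈ Finset.range (n + 1), ∑ m2 ∈ Finset.range (j + 1),
          StaircaseAux.G n m2 (m1 + j) := by
    intro j _
    unfold Cst StaircaseAux.G StaircaseAux.CH StaircaseAux.DD
    apply Finset.sum_congr rfl; intro m1 _
    apply Finset.sum_congr rfl; intro m2 _
    rw [show n + (m1 + j) + 3 = n + m1 + j + 3 by omega,
      show (2 : ℝ) - 1 = 1 by norm_num, one_pow, mul_one]
    push_cast
    ring
  rw [Finset.sum_congr rfl L1, StaircaseAux.reindex n]
  have step : ∑ s ∈ Finset.range (n + 1), ∑ k ∈ Finset.range (s + 1),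
        ((s : ℝ) - (k : ℝ) + 1) * StaircaseAux.G n k s
      = (1 / StaircaseAux.DD n)
        * ∑ t ∈ Finset.range (n + 2), ∑ k ∈ Finset.range t, StaircaseAux.Q n k t := by
    rw [Finset.sum_range_succ' (fun t => ∑ k ∈ Finset.range t, StaircaseAux.Q n k t) (n + 1)]
    simp only [Finset.range_zero, Finset.sum_empty, add_zero]
    rw [Finset.mul_sum]
    apply Finset.sum_congr rfl; intro s _
    rw [Finset.mul_sum]
    apply Finset.sum_congr rfl; intro k _
    exact StaircaseAux.GQ n k s
  rw [step]
  have h2T := StaircaseAux.half_square n (n + 2)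
  have hexp := StaircaseAux.expand n
  have hT : ∑ t ∈ Finset.range (n + 2), ∑ k ∈ Finset.range t, StaircaseAux.Q n k t
      = StaircaseAux.S n 0 * StaircaseAux.S n 3 + StaircaseAux.S n 0 * StaircaseAux.S n 2
        - StaircaseAux.S n 1 * StaircaseAux.S n 2 - StaircaseAux.S n 1 * StaircaseAux.S n 1 := by
    linarith [h2T, hexp]
  rw [hT, StaircaseAux.hS0, StaircaseAux.hS1, StaircaseAux.hS2, StaircaseAux.hS3]
  have hc := StaircaseAux.hcat n
  have hP : (4 : ℝ) ^ (n + 1) = 4 * 4 ^ n := by ring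
  rw [hP]
  unfold StaircaseAux.DD
  have hD : (2 * (n : ℝ) + 1) * (2 * (n : ℝ) + 2) * (2 * (n : ℝ) + 3) ^ 2 ≠ 0 := by positivity
  rw [one_div, inv_mul_eq_div, div_eq_iff hD]
  linear_combination (4 : ℝ) ^ n * (2 * (n : ℝ) + 3) * hc
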